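/- Let a < 1 with a ≠ 0 and x > 0, and define S_a(n,l) by the recursion in the context. Then for every integer n ≥ 0, the series ∑_{k=0}^∞ (1/k!) · (−x/a)^k · ∏_{i=0}^{n−1} (i − a·k) converges absolutely, and e^{x/a} · ∑_{k=0}^∞ (1/k!) · (−x/a)^k · ∏_{i=0}^{n−1} (i − a·k) = ∑_{l=0}^{n} x^l · S_a(n,l). -/

import Mathlib

/-!
The recursion for `S_a` says exactly that `S_a(n,l) (-a)^l` are the coefficients of
`∏_{i<n} (i - a t)` in the falling-factorial basis `(t)_l`: multiplying by `n - a t` and writing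
`n - a t = (n - a l) + (-a) (t - l)` reproduces it. Since `∑_k y^k/k! (k)_l = y^l e^y`, the series
with `y = -x/a` is a finite combination of exponential series and sums to
`e^{-x/a} ∑_l S_a(n,l) x^l`. Absolute convergence is automatic, as every summable real series is
absolutely summable.
-/

open Real Finset

/-- The numbers `S_a(n,l)` (generalized Stirling numbers up to the factor `a^{-l}`),
defined by `S_a(0,0) = 1`, `S_a(n,0) = 0` for `n ≥ 1`, `S_a(n,n) = 1`, and
`S_a(n+1,l) = (n − a·l)·S_a(n,l) + S_a(n,l−1)` for `1 ≤ l ≤ n` (and `S_a(n,l) = 0`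
for `l > n`). -/
noncomputable def Sgen (a : ℝ) : ℕ → ℕ → ℝ
  | 0, 0 => 1
  | 0, _ + 1 => 0
  | _ + 1, 0 => 0
  | n + 1, l + 1 => ((n : ℝ) - a * (l + 1)) * Sgen a n (l + 1) + Sgen a n l

theorem Sgen_eq_zero_of_lt (a : ℝ) {n l : ℕ} (h : n < l) : Sgen a n l = 0 := by
  induction n generalizing l with
  | zero => obtain ⟨l, rfl⟩ := Nat.exists_eq_add_of_lt h; rfl
  | succ n ih =>
    obtain ⟨l, rfl⟩ := Nat.exists_eq_add_of_le' (Nat.zero_lt_of_lt h)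
    simp only [Sgen, ih (by omega : n < l + 1), ih (by omega : n < l), mul_zero, add_zero]

theorem natCast_mul_Sgen_zero (a : ℝ) (n : ℕ) : (n : ℝ) * Sgen a n 0 = 0 := by
  cases n <;> simp [Sgen]

theorem prod_sub_mul_eq_sum_Sgen_mul_descPochhammer_eval (a t : ℝ) (n : ℕ) :
    ∏ i ∈ range n, ((i : ℝ) - a * t) =
      ∑ l ∈ range (n + 1), Sgen a n l * (-a) ^ l * (descPochhammer ℝ l).eval t := by
  induction n with
  | zero => simp [Sgen]
  | succ n ih =>
    set G : ℕ → ℝ := fun l =>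
      (n - a * l) * Sgen a n l * (-a) ^ l * (descPochhammer ℝ l).eval t
    have hshift : ∑ l ∈ range (n + 1), G l = ∑ l ∈ range (n + 1), G (l + 1) := calc
      _ = ∑ l ∈ range (n + 2), G l := by
        simp [sum_range_succ _ (n + 1), G, Sgen_eq_zero_of_lt a (Nat.lt_succ_self n)]
      _ = _ := by simp [sum_range_succ' _ (n + 1), G, natCast_mul_Sgen_zero]
    have hsplit (l : ℕ) : Sgen a n l * (-a) ^ l * (descPochhammer ℝ l).eval t * (n - a * t) =
        G l + Sgen a n l * (-a) ^ (l + 1) * (descPochhammer ℝ (l + 1)).eval t := by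
      simp only [G, descPochhammer_succ_eval]; ring
    rw [prod_range_succ, ih, sum_mul, sum_range_succ' _ (n + 1)]
    rw [sum_congr rfl fun l _ => hsplit l, sum_add_distrib, hshift, ← sum_add_distrib]
    refine (add_zero _).symm.trans (congrArg₂ _ (sum_congr rfl fun l _ => ?_) (by simp [Sgen]))
    simp only [G, Sgen]
    push_cast
    ring

open Nat in
theorem hasSum_pow_div_factorial_mul_descFactorial (y : ℝ) (l : ℕ) :
    HasSum (fun k : ℕ => y ^ k / k ! * k.descFactorial l) (y ^ l * exp y) := by
  have hshift (j : ℕ) :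
      y ^ (j + l) / (j + l)! * (j + l).descFactorial l = y ^ l * (y ^ j / j !) := by
    rw [← factorial_mul_descFactorial (Nat.le_add_left l j), Nat.add_sub_cancel]
    push_cast
    field_simp
    ring
  rw [← hasSum_nat_add_iff' l, sum_eq_zero fun k hk => by
    rw [descFactorial_of_lt (mem_range.1 hk), cast_zero, mul_zero], sub_zero]
  simp only [hshift]
  exact (exp_eq_exp_ℝ ▸ NormedSpace.expSeries_div_hasSum_exp y).mul_left _

theorem exp_series_eq_Sgen_sum_general (a x : ℝ) (ha0 : a ≠ 0)
    (n : ℕ) :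
    (Summable fun k : ℕ =>
      |(1 / (Nat.factorial k : ℝ)) * (-x / a) ^ k *
        ∏ i ∈ Finset.range n, ((i : ℝ) - a * k)|) ∧
    Real.exp (x / a) *
        ∑' k : ℕ, (1 / (Nat.factorial k : ℝ)) * (-x / a) ^ k *
          ∏ i ∈ Finset.range n, ((i : ℝ) - a * k) =
      ∑ l ∈ Finset.range (n + 1), x ^ l * Sgen a n l := by
  generalize hy : -x / a = y
  have hsum : HasSum
      (fun k : ℕ => 1 / (k.factorial : ℝ) * y ^ k * ∏ i ∈ range n, ((i : ℝ) - a * k))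
      (∑ l ∈ range (n + 1), Sgen a n l * (-a) ^ l * (y ^ l * exp y)) := by
    refine (hasSum_sum fun l _ => (hasSum_pow_div_factorial_mul_descFactorial y l).mul_left
      (Sgen a n l * (-a) ^ l)).congr_fun fun k => ?_
    simp only [prod_sub_mul_eq_sum_Sgen_mul_descPochhammer_eval,
      descPochhammer_eval_eq_descFactorial, mul_sum]
    exact sum_congr rfl fun l _ => by ring
  refine ⟨summable_abs_iff.2 hsum.summable, ?_⟩
  rw [hsum.tsum_eq, mul_sum]
  refine sum_congr rfl fun l _ => ?_
  have hxy : -a * y = x := by rw [← hy]; field_simp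
  calc exp (x / a) * (Sgen a n l * (-a) ^ l * (y ^ l * exp y))
      = (-a * y) ^ l * Sgen a n l * exp (x / a + y) := by rw [exp_add]; ring
    _ = x ^ l * Sgen a n l := by
      rw [hxy, show x / a + y = 0 by rw [← hy]; ring, exp_zero, mul_one]

/-- **Identity after (F.4)**: for `a < 1`, `a ≠ 0`, `x > 0` and `n ≥ 0`, the series
`∑_{k≥0} (1/k!)(−x/a)^k ∏_{i=0}^{n−1}(i − ak)` converges absolutely and
`e^{x/a} ∑_{k≥0} (1/k!)(−x/a)^k ∏_{i=0}^{n−1}(i − ak) = ∑_{l=0}^n x^l S_a(n,l)`. -/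
theorem exp_series_eq_Sgen_sum (a x : ℝ) (ha : a < 1) (ha0 : a ≠ 0) (hx : 0 < x)
    (n : ℕ) :
    (Summable fun k : ℕ =>
      |(1 / (Nat.factorial k : ℝ)) * (-x / a) ^ k *
        ∏ i ∈ Finset.range n, ((i : ℝ) - a * k)|) ∧
    Real.exp (x / a) *
        ∑' k : ℕ, (1 / (Nat.factorial k : ℝ)) * (-x / a) ^ k *
          ∏ i ∈ Finset.range n, ((i : ℝ) - a * k) =
      ∑ l ∈ Finset.range (n + 1), x ^ l * Sgen a n l :=
  exp_series_eq_Sgen_sum_general a x ha0 n
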